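/- Let X be a Tychonoff space and μ : C*(X) → ℝ a functional. Then μ is normed, weakly additive, preserves min and weakly preserves max (i.e. μ ∈ R_min(X)) if and only if there exists a nonempty compact set F ⊆ βX such that F = S(μ) and μ(f) = inf{βf(x) : x ∈ F} for all f ∈ C*(X). Moreover, μ ∈ R_min(X)_c (i.e. additionally S(μ) ⊆ η(X)) if and only if such an F exists with F ⊆ η(X). -/

import Mathlib

open Set

/-- The Čech–Stone extension `βf : βX → ℝ` of a bounded continuous function `f : X → ℝ`
(obtained by extending `f`, viewed as a map into the compact interval `[-‖f‖, ‖f‖]`,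
over the Stone–Čech compactification). -/
noncomputable def betaExt {X : Type*} [TopologicalSpace X] (f : BoundedContinuousFunction X ℝ) :
    StoneCech X → ℝ :=
  Subtype.val ∘ stoneCechExtend
    (Continuous.subtype_mk f.continuous
      (fun x => Set.mem_Icc.mpr (abs_le.mp (Real.norm_eq_abs (f x) ▸ f.norm_coe_le_norm x)))
      : Continuous fun x => (⟨f x, _⟩ : Set.Icc (-‖f‖) ‖f‖))

variable {X : Type*} [TopologicalSpace X]

/-- `μ` is *normed*: `μ 1 = 1`. -/
def BNormed (μ : BoundedContinuousFunction X ℝ → ℝ) : Prop := μ 1 = 1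

/-- `μ` is *weakly additive*: `μ (f + c·1) = μ f + c`. -/
def BWeaklyAdditive (μ : BoundedContinuousFunction X ℝ → ℝ) : Prop :=
  ∀ (f : BoundedContinuousFunction X ℝ) (c : ℝ),
    μ (f + BoundedContinuousFunction.const X c) = μ f + c

/-- `μ` *preserves min*. -/
def BPreservesMin (μ : BoundedContinuousFunction X ℝ → ℝ) : Prop :=
  ∀ f g : BoundedContinuousFunction X ℝ, μ (f ⊓ g) = min (μ f) (μ g)

/-- `μ` *preserves max*. -/
def BPreservesMax (μ : BoundedContinuousFunction X ℝ → ℝ) : Prop :=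
  ∀ f g : BoundedContinuousFunction X ℝ, μ (f ⊔ g) = max (μ f) (μ g)

/-- `μ` *weakly preserves min*: `μ (min{f, c·1}) = min{μ f, c}`. -/
def BWeaklyPreservesMin (μ : BoundedContinuousFunction X ℝ → ℝ) : Prop :=
  ∀ (f : BoundedContinuousFunction X ℝ) (c : ℝ),
    μ (f ⊓ BoundedContinuousFunction.const X c) = min (μ f) c

/-- `μ` *weakly preserves max*: `μ (max{f, c·1}) = max{μ f, c}`. -/
def BWeaklyPreservesMax (μ : BoundedContinuousFunction X ℝ → ℝ) : Prop :=
  ∀ (f : BoundedContinuousFunction X ℝ) (c : ℝ),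
    μ (f ⊔ BoundedContinuousFunction.const X c) = max (μ f) c

/-- The support `S(μ) ⊆ βX` of a functional `μ` on `C*(X)`: points `p ∈ βX` such that every
open neighbourhood `O` of `p` admits `f, g ∈ C*(X)` with `βf = βg` off `O` and `μ f ≠ μ g`. -/
def betaSupport (μ : BoundedContinuousFunction X ℝ → ℝ) : Set (StoneCech X) :=
  {p | ∀ O : Set (StoneCech X), IsOpen O → p ∈ O →
    ∃ f g : BoundedContinuousFunction X ℝ,
      (∀ q ∉ O, betaExt f q = betaExt g q) ∧ μ f ≠ μ g}

/-- `R_min(X)`: normed, weakly additive functionals preserving min and weakly preserving max. -/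
def RMin (X : Type*) [TopologicalSpace X] : Set (BoundedContinuousFunction X ℝ → ℝ) :=
  {μ | BNormed μ ∧ BWeaklyAdditive μ ∧ BPreservesMin μ ∧ BWeaklyPreservesMax μ}

/-- `R_max(X)`: normed, weakly additive functionals preserving max and weakly preserving min. -/
def RMax (X : Type*) [TopologicalSpace X] : Set (BoundedContinuousFunction X ℝ → ℝ) :=
  {μ | BNormed μ ∧ BWeaklyAdditive μ ∧ BPreservesMax μ ∧ BWeaklyPreservesMin μ}

/-- `R_min(X)_c`: members of `R_min(X)` with compact support, i.e. `∅ ≠ S(μ) ⊆ η(X)`. -/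
def RMinC (X : Type*) [TopologicalSpace X] : Set (BoundedContinuousFunction X ℝ → ℝ) :=
  {μ | μ ∈ RMin X ∧ (betaSupport μ).Nonempty ∧
    betaSupport μ ⊆ Set.range (stoneCechUnit : X → StoneCech X)}

/-- `R_max(X)_c`: members of `R_max(X)` with compact support, i.e. `∅ ≠ S(μ) ⊆ η(X)`. -/
def RMaxC (X : Type*) [TopologicalSpace X] : Set (BoundedContinuousFunction X ℝ → ℝ) :=
  {μ | μ ∈ RMax X ∧ (betaSupport μ).Nonempty ∧
    betaSupport μ ⊆ Set.range (stoneCechUnit : X → StoneCech X)}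

/-!
For nonempty `F ⊆ βX`, the functional `f ↦ inf_F βf` lies in `R_min(X)` because `f ↦ βf`
commutes with `⊓`, `⊔` and constants, and monotone continuous maps commute with infima.
Conversely, for `μ ∈ R_min(X)` take `F = {p | μ g ≤ βg p for all g}`. The heart of the proof is
that for any `f, h` some `p ∈ βX` has `βf p ≤ μ f` and `μ h ≤ βh p` (otherwise compactness of
`βX` gives a uniform gap `ε`, and clamping to `[0, ε]` contradicts monotonicity of `μ`).
Applied to `h` a finite infimum of the normalized functions `g - μ g`, compactness of `βX`
yields a point of `F` where `βf ≤ μ f`, so `μ f = min_F βf`. A closed set representing `μ` in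
this way is its support: functions agreeing on `F` have the same value, and a Urysohn function
on `βX` vanishing at `p ∈ F` and equal to `1` off a neighbourhood of `p` has `μ`-value
`≤ 0 < 1 = μ 1`.
-/

open BoundedContinuousFunction

section BetaExt

variable {X : Type*} [TopologicalSpace X]

theorem betaExt_stoneCechUnit (f : X →ᵇ ℝ) (x : X) : betaExt f (stoneCechUnit x) = f x :=
  congrArg Subtype.val (congrFun (stoneCechExtend_extends _) x)

theorem continuous_betaExt (f : X →ᵇ ℝ) : Continuous (betaExt f) :=
  continuous_subtype_val.comp (continuous_stoneCechExtend _)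

theorem betaExt_eq_of_continuous {f : X →ᵇ ℝ} {u : StoneCech X → ℝ} (hu : Continuous u)
    (h : ∀ x, u (stoneCechUnit x) = f x) : betaExt f = u :=
  stoneCech_hom_ext (continuous_betaExt f) hu
    (funext fun x => (betaExt_stoneCechUnit f x).trans (h x).symm)

theorem betaExt_const (c : ℝ) (p : StoneCech X) : betaExt (const X c) p = c :=
  congrFun (betaExt_eq_of_continuous continuous_const fun _ => rfl) p

theorem betaExt_add (f g : X →ᵇ ℝ) (p : StoneCech X) :
    betaExt (f + g) p = betaExt f p + betaExt g p :=
  congrFun (betaExt_eq_of_continuous ((continuous_betaExt f).add (continuous_betaExt g))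
    fun x => by simp [betaExt_stoneCechUnit]) p

theorem betaExt_inf (f g : X →ᵇ ℝ) (p : StoneCech X) :
    betaExt (f ⊓ g) p = min (betaExt f p) (betaExt g p) :=
  congrFun (betaExt_eq_of_continuous ((continuous_betaExt f).min (continuous_betaExt g))
    fun x => by simp [betaExt_stoneCechUnit]) p

theorem betaExt_sup (f g : X →ᵇ ℝ) (p : StoneCech X) :
    betaExt (f ⊔ g) p = max (betaExt f p) (betaExt g p) :=
  congrFun (betaExt_eq_of_continuous ((continuous_betaExt f).max (continuous_betaExt g))
    fun x => by simp [betaExt_stoneCechUnit]) p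

theorem bddBelow_range_betaExt (f : X →ᵇ ℝ) : BddBelow (range (betaExt f)) :=
  ⟨-‖f‖, forall_mem_range.2 fun p => (Subtype.prop (stoneCechExtend _ p) : _ ∈ Icc _ _).1⟩

theorem bddBelow_image_betaExt (f : X →ᵇ ℝ) (F : Set (StoneCech X)) :
    BddBelow (betaExt f '' F) :=
  (bddBelow_range_betaExt f).mono (image_subset_range _ _)

end BetaExt

theorem sInf_image_comp_of_monotone {α : Type*} {φ : ℝ → ℝ} (hφ : Monotone φ)
    (hφc : Continuous φ) {u : α → ℝ} {F : Set α} (hF : F.Nonempty) (hu : BddBelow (u '' F)) :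
    sInf ((fun p => φ (u p)) '' F) = φ (sInf (u '' F)) := by
  rw [hφ.map_csInf_of_continuousAt hφc.continuousAt (hF.image u) hu, image_image]

section Representation

variable {X : Type*} [TopologicalSpace X]

theorem sInf_image_betaExt_inf (f g : X →ᵇ ℝ) (F : Set (StoneCech X)) :
    sInf (betaExt (f ⊓ g) '' F) = min (sInf (betaExt f '' F)) (sInf (betaExt g '' F)) := by
  simp only [sInf_image', betaExt_inf]
  exact ciInf_inf_eq
    ((bddBelow_range_betaExt f).mono (range_comp_subset_range Subtype.val (betaExt f)))
    ((bddBelow_range_betaExt g).mono (range_comp_subset_range Subtype.val (betaExt g)))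

theorem mem_RMin_of_eq_sInf {μ : (X →ᵇ ℝ) → ℝ} {F : Set (StoneCech X)} (hF : F.Nonempty)
    (hμ : ∀ f, μ f = sInf (betaExt f '' F)) : μ ∈ RMin X := by
  refine ⟨?_, fun f c => ?_, fun f g => ?_, fun f c => ?_⟩
  · show μ (const X 1) = 1
    simp only [hμ, betaExt_const, hF.image_const, csInf_singleton]
  · simp only [hμ, betaExt_add, betaExt_const]
    exact sInf_image_comp_of_monotone (φ := (· + c)) (monotone_id.add_const c)
      (continuous_add_const c) hF (bddBelow_image_betaExt f F)
  · simp only [hμ, sInf_image_betaExt_inf]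
  · simp only [hμ, betaExt_sup, betaExt_const]
    exact sInf_image_comp_of_monotone (fun _ _ h => max_le_max_right c h)
      (continuous_id.max continuous_const) hF (bddBelow_image_betaExt f F)

end Representation

section Support

variable {X : Type*} [TopologicalSpace X]

theorem betaSupport_eq_of_eq_sInf {μ : (X →ᵇ ℝ) → ℝ} {F : Set (StoneCech X)} (hF : IsClosed F)
    (hμ : ∀ f, μ f = sInf (betaExt f '' F)) : betaSupport μ = F := by
  ext p
  refine ⟨fun hp => ?_, fun hp O hO hpO => ?_⟩
  · by_contra hpF
    obtain ⟨f, g, hfg, hne⟩ := hp Fᶜ hF.isOpen_compl hpF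
    refine hne ?_
    rw [hμ, hμ]
    exact congrArg sInf (image_congr fun q hq => hfg q (not_not_intro hq))
  · obtain ⟨v, hvp, hvO, -⟩ := exists_continuous_zero_one_of_isClosed isClosed_singleton
      hO.isClosed_compl (disjoint_singleton_left.2 (not_not_intro hpO))
    let f : X →ᵇ ℝ := (mkOfCompact v).compContinuous ⟨stoneCechUnit, continuous_stoneCechUnit⟩
    have hf : betaExt f = v := betaExt_eq_of_continuous v.continuous fun _ => rfl
    refine ⟨f, const X 1, fun q hq => by rw [hf, betaExt_const, hvO hq]; rfl, ?_⟩
    have hfp : μ f ≤ 0 :=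
      calc μ f ≤ betaExt f p := (hμ f).trans_le <|
            csInf_le (bddBelow_image_betaExt f F) (mem_image_of_mem _ hp)
        _ = 0 := by rw [hf]; exact hvp (mem_singleton p)
    have hone : μ (const X 1) = 1 := by
      simp only [hμ, betaExt_const, Nonempty.image_const ⟨p, hp⟩, csInf_singleton]
    linarith

end Support

section Forward

variable {X : Type*} [TopologicalSpace X] {μ : (X →ᵇ ℝ) → ℝ}

theorem BWeaklyAdditive.map_const (hA : BWeaklyAdditive μ) (hN : BNormed μ) (c : ℝ) :
    μ (const X c) = c := by
  have h1 := hA 0 1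
  have hc := hA 0 c
  rw [zero_add] at h1 hc
  change μ 1 = _ at h1
  rw [hN] at h1
  linarith

theorem BPreservesMin.monotone (hmin : BPreservesMin μ) : Monotone μ := fun f g hfg => by
  rw [← inf_eq_left.2 hfg, hmin]
  exact min_le_right _ _

theorem RMin.exists_betaExt_le_and_le (hμ : μ ∈ RMin X) (f h : X →ᵇ ℝ) :
    ∃ p, betaExt f p ≤ μ f ∧ μ h ≤ betaExt h p := by
  obtain ⟨hN, hA, hmin, hmax⟩ := hμ
  by_contra! hcon
  obtain ⟨ε, hε, hεw⟩ := isCompact_univ.exists_forall_le' (a := 0)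
    (f := fun p => max (betaExt f p - μ f) (μ h - betaExt h p))
    (((continuous_betaExt f).sub continuous_const).max
      (continuous_const.sub (continuous_betaExt h))).continuousOn
    fun p _ => by
      by_cases hp : betaExt f p ≤ μ f
      · exact lt_max_of_lt_right (sub_pos.2 (hcon p hp))
      · exact lt_max_of_lt_left (sub_pos.2 (not_le.1 hp))
  have hsep : ∀ x, ε ≤ f x - μ f ∨ ε ≤ μ h - h x := fun x => by
    simpa only [betaExt_stoneCechUnit] using le_max_iff.1 (hεw (stoneCechUnit x) (mem_univ _))
  -- Clamped to `[0, ε]`, `h` shifted to `μ`-value `ε` lies below `f` shifted to `μ`-value `0`.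
  let clamp : (X →ᵇ ℝ) → X →ᵇ ℝ := fun g => (g ⊔ const X 0) ⊓ const X ε
  have hμclamp : ∀ g, μ (clamp g) = min (max (μ g) 0) ε := fun g => by
    rw [hmin, hA.map_const hN, hmax]
  have hle : clamp (h + const X (ε - μ h)) ≤ clamp (f + const X (-μ f)) := fun x => by
    change min (max (h x + (ε - μ h)) 0) ε ≤ min (max (f x + -μ f) 0) ε
    rcases hsep x with hx | hx
    · exact (min_le_right _ _).trans (le_min (le_max_of_le_left (by linarith)) le_rfl)
    · rw [max_eq_right (by linarith), min_eq_left hε.le]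
      exact le_min (le_max_right _ _) hε.le
  have := hmin.monotone hle
  rw [hμclamp, hμclamp, hA, hA, add_sub_cancel, add_neg_cancel, max_eq_left hε.le,
    max_self, min_self, min_eq_left hε.le] at this
  exact this.not_gt hε

theorem RMin.exists_lower_bound_of_finset (hμ : μ ∈ RMin X) (s : Finset (X →ᵇ ℝ)) :
    ∃ h, μ h = 0 ∧ ∀ g ∈ s, ∀ p, betaExt h p + μ g ≤ betaExt g p := by
  obtain ⟨hN, hA, hmin, -⟩ := hμ
  classical
  induction s using Finset.induction_on with
  | empty => exact ⟨const X 0, hA.map_const hN 0, by simp⟩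
  | insert g s _ ih =>
    obtain ⟨h, hh, hle⟩ := ih
    refine ⟨h ⊓ (g + const X (-μ g)), ?_, ?_⟩
    · rw [hmin, hA, hh, add_neg_cancel, min_self]
    · intro g' hg' p
      rw [betaExt_inf, betaExt_add, betaExt_const]
      rcases Finset.mem_insert.1 hg' with rfl | hg'
      · linarith [min_le_right (betaExt h p) (betaExt g' p + -μ g')]
      · linarith [min_le_left (betaExt h p) (betaExt g p + -μ g), hle g' hg' p]

variable (μ) in
def dominatingSet : Set (StoneCech X) := {p | ∀ g, μ g ≤ betaExt g p}

theorem isClosed_dominatingSet : IsClosed (dominatingSet μ) := by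
  simp only [dominatingSet, ofPred_forall]
  exact isClosed_iInter fun g => isClosed_le continuous_const (continuous_betaExt g)

theorem RMin.exists_mem_dominatingSet_betaExt_le (hμ : μ ∈ RMin X) (f : X →ᵇ ℝ) :
    ∃ p ∈ dominatingSet μ, betaExt f p ≤ μ f := by
  obtain ⟨p, hpf, hp⟩ := ((isClosed_le (continuous_betaExt f) continuous_const).isCompact
    |>.inter_iInter_nonempty (fun g => {p | μ g ≤ betaExt g p})
      (fun g => isClosed_le continuous_const (continuous_betaExt g)) fun s => by
        obtain ⟨h, hh, hle⟩ := RMin.exists_lower_bound_of_finset hμ s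
        obtain ⟨p, hpf, hph⟩ := RMin.exists_betaExt_le_and_le hμ f h
        refine ⟨p, hpf, mem_iInter₂.2 fun g hg => ?_⟩
        show μ g ≤ betaExt g p
        linarith [hle g hg p])
  exact ⟨p, mem_iInter.1 hp, hpf⟩

theorem RMin.eq_sInf_dominatingSet (hμ : μ ∈ RMin X) (f : X →ᵇ ℝ) :
    μ f = sInf (betaExt f '' dominatingSet μ) := by
  obtain ⟨p, hp, hpf⟩ := RMin.exists_mem_dominatingSet_betaExt_le hμ f
  refine le_antisymm (le_csInf ⟨_, mem_image_of_mem _ hp⟩ ?_)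
    ((csInf_le (bddBelow_image_betaExt f _) (mem_image_of_mem _ hp)).trans hpf)
  rintro _ ⟨q, hq, rfl⟩
  exact hq f

end Forward

theorem statement7_general {X : Type*} [TopologicalSpace X]
    (μ : BoundedContinuousFunction X ℝ → ℝ) :
    (μ ∈ RMin X ↔
      ∃ F : Set (StoneCech X), F.Nonempty ∧ IsCompact F ∧ F = betaSupport μ ∧
        ∀ f : BoundedContinuousFunction X ℝ, μ f = sInf (betaExt f '' F)) ∧
    (μ ∈ RMinC X ↔
      ∃ F : Set (StoneCech X), F.Nonempty ∧ IsCompact F ∧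
        F ⊆ Set.range (stoneCechUnit : X → StoneCech X) ∧ F = betaSupport μ ∧
        ∀ f : BoundedContinuousFunction X ℝ, μ f = sInf (betaExt f '' F)) := by
  have hRMin : μ ∈ RMin X ↔ ∃ F : Set (StoneCech X), F.Nonempty ∧ IsCompact F ∧
      F = betaSupport μ ∧ ∀ f, μ f = sInf (betaExt f '' F) := by
    refine ⟨fun hμ => ?_, fun ⟨F, hF, _, _, hμF⟩ => mem_RMin_of_eq_sInf hF hμF⟩
    have hμF := RMin.eq_sInf_dominatingSet hμ
    obtain ⟨p, hp, -⟩ := RMin.exists_mem_dominatingSet_betaExt_le hμ 0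
    exact ⟨dominatingSet μ, ⟨p, hp⟩, isClosed_dominatingSet.isCompact,
      (betaSupport_eq_of_eq_sInf isClosed_dominatingSet hμF).symm, hμF⟩
  refine ⟨hRMin, ⟨?_, ?_⟩⟩
  · rintro ⟨hμ, -, hsub⟩
    obtain ⟨F, hF, hFc, rfl, hμF⟩ := hRMin.1 hμ
    exact ⟨_, hF, hFc, hsub, rfl, hμF⟩
  · rintro ⟨F, hF, hFc, hsub, rfl, hμF⟩
    exact ⟨hRMin.2 ⟨_, hF, hFc, rfl, hμF⟩, hF, hsub⟩

/-- `μ ∈ R_min(X)` iff there is a nonempty compact `F ⊆ βX` with `F = S(μ)` and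
`μ f = inf {βf p : p ∈ F}` for all `f ∈ C*(X)`; moreover `μ ∈ R_min(X)_c` iff such an `F`
exists contained in `η(X)`. -/
theorem statement7 {X : Type*} [TopologicalSpace X] [T35Space X]
    (μ : BoundedContinuousFunction X ℝ → ℝ) :
    (μ ∈ RMin X ↔
      ∃ F : Set (StoneCech X), F.Nonempty ∧ IsCompact F ∧ F = betaSupport μ ∧
        ∀ f : BoundedContinuousFunction X ℝ, μ f = sInf (betaExt f '' F)) ∧
    (μ ∈ RMinC X ↔
      ∃ F : Set (StoneCech X), F.Nonempty ∧ IsCompact F ∧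
        F ⊆ Set.range (stoneCechUnit : X → StoneCech X) ∧ F = betaSupport μ ∧
        ∀ f : BoundedContinuousFunction X ℝ, μ f = sInf (betaExt f '' F)) :=
  statement7_general μ
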